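/- arXiv:math/0103149 — 6 statements merged into one kernel-verified Lean document; each statement's English description precedes it below -/
import Mathlib

section
/- The formal power series F(T) = Σ_{n≥0} g_n(α) T^n, where g_0(α) = 1 and g_n(α) = (1/n) Σ_{k=0}^{n-1} C(n,k) C(n,k+1) β^{n-k} α^k for n ≥ 1, satisfies (2TαF(T) − 1 − T(α−β))² = 1 − 2T(α+β) + T²(α−β)². -/
set_option maxHeartbeats 2000000
open Finset

def sh (f : ℕ → ℚ) : ℕ → ℚ := fun j => if j = 0 then 0 else f (j-1)
@[simp] lemma sh_zero (f : ℕ → ℚ) : sh f 0 = 0 := rfl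
@[simp] lemma sh_succ (f : ℕ → ℚ) (k : ℕ) : sh f (k+1) = f k := rfl
lemma sh_mul_left' (c : ℚ) (f : ℕ → ℚ) : sh (fun j => c * f j) = fun k => c * sh f k := by
  funext k; cases k <;> simp [sh]
lemma sh_mul_right' (c : ℚ) (f : ℕ → ℚ) : sh (fun j => f j * c) = fun k => sh f k * c := by
  funext k; cases k <;> simp [sh]

lemma chooseR (n k : ℕ) : ((n.choose (k+1) : ℚ)) * (k+1) = (n.choose k : ℚ) * ((n:ℚ) - k) := by
  rcases le_or_gt k n with h | h
  · have h1 := Nat.choose_succ_right_eq n k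
    have h2 : ((n - k : ℕ) : ℚ) = (n:ℚ) - k := by push_cast [Nat.cast_sub h]; ring
    have := congrArg (fun z : ℕ => (z : ℚ)) h1
    push_cast at this
    rw [this, h2]
  · rw [Nat.choose_eq_zero_of_lt h, Nat.choose_eq_zero_of_lt (by omega)]; simp

lemma pascalQ (n k : ℕ) : ((n+1).choose (k+1) : ℚ) = (n.choose k : ℚ) + (n.choose (k+1) : ℚ) := by
  rw [Nat.choose_succ_succ]; push_cast; ring

lemma key_generic (p j : ℕ) (hjp : j ≤ p) :
    ((p:ℚ)+4)/((p:ℚ)+3) * (((p+3).choose (j+2) : ℚ) * ((p+3).choose (j+3) : ℚ))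
      = (2*(p:ℚ)+5)/((p:ℚ)+2) *
          (((p+2).choose (j+1) : ℚ) * ((p+2).choose (j+2) : ℚ)
            + ((p+2).choose (j+2) : ℚ) * ((p+2).choose (j+3) : ℚ))
        - (((p+1).choose j : ℚ) * ((p+1).choose (j+1) : ℚ)
            - 2 * ((p+1).choose (j+1) : ℚ) * ((p+1).choose (j+2) : ℚ)
            + ((p+1).choose (j+2) : ℚ) * ((p+1).choose (j+3) : ℚ)) := by
  set X : ℚ := ((p+1).choose j : ℚ) with hXdef
  set A : ℚ := ((p+1).choose (j+1) : ℚ) with hAdef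
  set B : ℚ := ((p+1).choose (j+2) : ℚ) with hBdef
  set Y : ℚ := ((p+1).choose (j+3) : ℚ) with hYdef
  have e1 : ((p+2).choose (j+1) : ℚ) = X + A := by
    rw [show p+2 = (p+1)+1 from rfl, show j+1 = j+1 from rfl, pascalQ (p+1) j]
  have e2 : ((p+2).choose (j+2) : ℚ) = A + B := pascalQ (p+1) (j+1)
  have e3 : ((p+2).choose (j+3) : ℚ) = B + Y := pascalQ (p+1) (j+2)
  have e4 : ((p+3).choose (j+2) : ℚ) = X + 2*A + B := by
    rw [show p+3 = (p+2)+1 from rfl, pascalQ (p+2) (j+1), e1, e2]; ring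
  have e5 : ((p+3).choose (j+3) : ℚ) = A + 2*B + Y := by
    rw [show p+3 = (p+2)+1 from rfl, pascalQ (p+2) (j+2), e2, e3]; ring
  have r1 : A * ((j:ℚ)+1) = X * ((p:ℚ)+1-j) := by
    have := chooseR (p+1) j; push_cast at this; rw [hAdef, hXdef]
    push_cast; linarith [this]
  have r2 : B * ((j:ℚ)+2) = A * ((p:ℚ)-j) := by
    have := chooseR (p+1) (j+1); push_cast at this
    rw [hBdef, hAdef]; push_cast; linarith [this]
  have r3 : Y * ((j:ℚ)+3) = B * ((p:ℚ)-1-j) := by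
    have := chooseR (p+1) (j+2); push_cast at this
    rw [hYdef, hBdef]; push_cast; linarith [this]
  have hd1 : (p:ℚ)+1-j ≠ 0 := by
    have : (j:ℚ) ≤ (p:ℚ) := by exact_mod_cast hjp
    linarith
  have hj2 : (j:ℚ)+2 ≠ 0 := by positivity
  have hj3 : (j:ℚ)+3 ≠ 0 := by positivity
  have hp3 : (p:ℚ)+3 ≠ 0 := by positivity
  have hp2 : (p:ℚ)+2 ≠ 0 := by positivity
  have hX : X = A * ((j:ℚ)+1) / ((p:ℚ)+1-j) := by field_simp; linarith [r1]
  have hB : B = A * ((p:ℚ)-j) / ((j:ℚ)+2) := by field_simp; linarith [r2]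
  have hY : Y = B * ((p:ℚ)-1-j) / ((j:ℚ)+3) := by field_simp; linarith [r3]
  rw [e1, e2, e3, e4, e5, hX, hY, hB]
  field_simp
  ring

lemma choose2Q (n : ℕ) : ((n.choose 2 : ℕ):ℚ) = (n:ℚ)*((n:ℚ)-1)/2 := by
  have := chooseR n 1
  simp only [Nat.choose_one_right] at this
  push_cast at this ⊢
  linarith

lemma keyCoef (M j : ℕ) :
    ((M:ℚ)+4)/((M:ℚ)+3) * (((M+3).choose j : ℚ) * ((M+3).choose (j+1) : ℚ))
    = (2*(M:ℚ)+5)/((M:ℚ)+2) *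
        (sh (fun k => ((M+2).choose k : ℚ) * ((M+2).choose (k+1) : ℚ)) j
          + ((M+2).choose j : ℚ) * ((M+2).choose (j+1) : ℚ))
      - (sh (sh (fun k => ((M+1).choose k : ℚ) * ((M+1).choose (k+1) : ℚ))) j
          + (-2) * sh (fun k => ((M+1).choose k : ℚ) * ((M+1).choose (k+1) : ℚ)) j
          + ((M+1).choose j : ℚ) * ((M+1).choose (j+1) : ℚ)) := by
  have hM3 : ((M:ℚ)+3) ≠ 0 := by positivity
  have hM2 : ((M:ℚ)+2) ≠ 0 := by positivity
  match j with
  | 0 =>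
    simp only [sh_zero, zero_add, Nat.choose_zero_right, Nat.choose_one_right]
    push_cast
    field_simp
    ring
  | 1 =>
    simp only [sh_succ, sh_zero, zero_add, Nat.choose_zero_right, Nat.choose_one_right]
    rw [show (2:ℕ) = 1+1 from rfl] at *
    simp only [show (1:ℕ)+1 = 2 from rfl]
    rw [choose2Q (M+3), choose2Q (M+2), choose2Q (M+1)]
    push_cast
    field_simp
    ring
  | (i+2) =>
    simp only [sh_succ]
    rcases le_or_gt i M with h | h
    · have := key_generic M i h
      push_cast at this ⊢
      linarith [this]
    · have z1 : (M+3).choose (i+3) = 0 := Nat.choose_eq_zero_of_lt (by omega)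
      have z2 : (M+2).choose (i+2) = 0 := Nat.choose_eq_zero_of_lt (by omega)
      have z3 : (M+2).choose (i+3) = 0 := Nat.choose_eq_zero_of_lt (by omega)
      have z4 : (M+1).choose (i+1) = 0 := Nat.choose_eq_zero_of_lt (by omega)
      have z5 : (M+1).choose (i+2) = 0 := Nat.choose_eq_zero_of_lt (by omega)
      have z6 : (M+1).choose (i+3) = 0 := Nat.choose_eq_zero_of_lt (by omega)
      rw [z1, z2, z3, z4, z5, z6]
      push_cast
      ring

section
variable {R : Type*} [CommRing R] [Algebra ℚ R]

lemma two_smul_eq (x : R) : (2:ℚ) • x = 2 * x := by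
  rw [Algebra.smul_def, map_ofNat]

lemma gRecAux (α β : R) (g : ℕ → R)
    (hg : ∀ n : ℕ, 1 ≤ n →
      g n = ((n : ℚ)⁻¹) • ∑ k ∈ Finset.range n,
        ((n.choose k : ℚ) * (n.choose (k + 1) : ℚ)) • (β ^ (n - k) * α ^ k)) (M : ℕ) :
    ((M:ℚ)+4) • g (M+3) = (2*(M:ℚ)+5) • ((α+β) * g (M+2)) - ((M:ℚ)+1) • ((α-β)^2 * g (M+1)) := by
  -- canonical forms
  have hL : ((M:ℚ)+4) • g (M+3)
      = ∑ k ∈ range (M+3),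
          (((M:ℚ)+4) * (((M+3:ℕ)):ℚ)⁻¹ * (((M+3).choose k : ℚ) * ((M+3).choose (k+1) : ℚ)))
            • (β ^ (M+3-k) * α ^ k) := by
    rw [hg (M+3) (by omega), smul_smul, Finset.smul_sum]
    exact Finset.sum_congr rfl fun k _ => by rw [smul_smul]
  have hR1 : (2*(M:ℚ)+5) • ((α+β) * g (M+2))
      = (∑ k ∈ range (M+2),
          ((2*(M:ℚ)+5) * (((M+2:ℕ)):ℚ)⁻¹ * (((M+2).choose k : ℚ) * ((M+2).choose (k+1) : ℚ)))
            • (β ^ (M+3-k) * α ^ k))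
        + (∑ k ∈ range (M+2),
          ((2*(M:ℚ)+5) * (((M+2:ℕ)):ℚ)⁻¹ * (((M+2).choose k : ℚ) * ((M+2).choose (k+1) : ℚ)))
            • (β ^ (M+3-(k+1)) * α ^ (k+1))) := by
    rw [hg (M+2) (by omega), mul_smul_comm, smul_smul, Finset.mul_sum, Finset.smul_sum,
      ← Finset.sum_add_distrib]
    apply Finset.sum_congr rfl
    intro k hk
    have hk' : k < M+2 := Finset.mem_range.mp hk
    rw [mul_smul_comm, smul_smul, ← smul_add]
    congr 1
    have h1 : M+3-k = (M+2-k)+1 := by omega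
    have h2 : M+3-(k+1) = M+2-k := by omega
    rw [h1, h2]
    ring
  have hR2 : ((M:ℚ)+1) • ((α-β)^2 * g (M+1))
      = (∑ k ∈ range (M+1),
          (((M:ℚ)+1) * (((M+1:ℕ)):ℚ)⁻¹ * (((M+1).choose k : ℚ) * ((M+1).choose (k+1) : ℚ)))
            • (β ^ (M+3-k) * α ^ k))
        - (∑ k ∈ range (M+1),
          ((((M:ℚ)+1) * (((M+1:ℕ)):ℚ)⁻¹ * (((M+1).choose k : ℚ) * ((M+1).choose (k+1) : ℚ))) * 2)
            • (β ^ (M+3-(k+1)) * α ^ (k+1)))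
        + (∑ k ∈ range (M+1),
          (((M:ℚ)+1) * (((M+1:ℕ)):ℚ)⁻¹ * (((M+1).choose k : ℚ) * ((M+1).choose (k+1) : ℚ)))
            • (β ^ (M+3-(k+2)) * α ^ (k+2))) := by
    rw [hg (M+1) (by omega), mul_smul_comm, smul_smul, Finset.mul_sum, Finset.smul_sum,
      ← Finset.sum_sub_distrib, ← Finset.sum_add_distrib]
    apply Finset.sum_congr rfl
    intro k hk
    have hk' : k < M+1 := Finset.mem_range.mp hk
    rw [mul_smul_comm, smul_smul]
    rw [show ((((M:ℚ)+1) * (((M+1:ℕ)):ℚ)⁻¹ * (((M+1).choose k : ℚ) * ((M+1).choose (k+1) : ℚ))) * 2)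
        • (β ^ (M+3-(k+1)) * α ^ (k+1))
      = (((M:ℚ)+1) * (((M+1:ℕ)):ℚ)⁻¹ * (((M+1).choose k : ℚ) * ((M+1).choose (k+1) : ℚ)))
        • ((2:ℚ) • (β ^ (M+3-(k+1)) * α ^ (k+1))) from by rw [smul_smul]]
    rw [← smul_sub, ← smul_add]
    congr 1
    rw [two_smul_eq]
    have h1 : M+3-k = (M+1-k)+2 := by omega
    have h2 : M+3-(k+1) = (M+1-k)+1 := by omega
    have h3 : M+3-(k+2) = M+1-k := by omega
    rw [h1, h2, h3]
    ring
  have ext0 : ∀ (N N' : ℕ) (f : ℕ → ℚ), N ≤ N' → (∀ k, N ≤ k → f k = 0) →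
      (∑ k ∈ range N, f k • (β ^ (M+3-k) * α ^ k))
        = ∑ k ∈ range N', f k • (β ^ (M+3-k) * α ^ k) := by
    intro N N' f h hf
    apply Finset.sum_subset (Finset.range_subset_range.mpr h)
    intro x _ hx
    rw [hf x (by simpa using hx), zero_smul]
  have ext1 : ∀ (N N' : ℕ) (f : ℕ → ℚ), N ≤ N' → (∀ k, N ≤ k → f k = 0) →
      (∑ k ∈ range N, f k • (β ^ (M+3-(k+1)) * α ^ (k+1)))
        = ∑ k ∈ range N', f k • (β ^ (M+3-(k+1)) * α ^ (k+1)) := by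
    intro N N' f h hf
    apply Finset.sum_subset (Finset.range_subset_range.mpr h)
    intro x _ hx
    rw [hf x (by simpa using hx), zero_smul]
  have ext2 : ∀ (N N' : ℕ) (f : ℕ → ℚ), N ≤ N' → (∀ k, N ≤ k → f k = 0) →
      (∑ k ∈ range N, f k • (β ^ (M+3-(k+2)) * α ^ (k+2)))
        = ∑ k ∈ range N', f k • (β ^ (M+3-(k+2)) * α ^ (k+2)) := by
    intro N N' f h hf
    apply Finset.sum_subset (Finset.range_subset_range.mpr h)
    intro x _ hx
    rw [hf x (by simpa using hx), zero_smul]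
  have shift1 : ∀ f : ℕ → ℚ, (∑ k ∈ range (M+4), f k • (β^(M+3-(k+1)) * α^(k+1)))
      = ∑ k ∈ range (M+5), sh f k • (β^(M+3-k) * α^k) := by
    intro f
    rw [show M+5 = (M+4)+1 from rfl,
      Finset.sum_range_succ' (fun k => sh f k • (β^(M+3-k) * α^k)) (M+4)]
    simp
  have shift2 : ∀ f : ℕ → ℚ, (∑ k ∈ range (M+3), f k • (β^(M+3-(k+2)) * α^(k+2)))
      = ∑ k ∈ range (M+4), sh f k • (β^(M+3-(k+1)) * α^(k+1)) := by
    intro f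
    rw [show M+4 = (M+3)+1 from rfl,
      Finset.sum_range_succ' (fun k => sh f k • (β^(M+3-(k+1)) * α^(k+1))) (M+3)]
    simp
  rw [hL, hR1, hR2]
  rw [ext0 (M+3) (M+5) _ (by omega) (fun k hk => by
    rw [Nat.choose_eq_zero_of_lt (show M+3 < k+1 by omega)]
    push_cast; ring)]
  rw [ext0 (M+2) (M+5) _ (by omega) (fun k hk => by
    rw [Nat.choose_eq_zero_of_lt (show M+2 < k+1 by omega)]
    push_cast; ring)]
  rw [ext1 (M+2) (M+4) _ (by omega) (fun k hk => by
    rw [Nat.choose_eq_zero_of_lt (show M+2 < k+1 by omega)]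
    push_cast; ring)]
  rw [ext0 (M+1) (M+5) _ (by omega) (fun k hk => by
    rw [Nat.choose_eq_zero_of_lt (show M+1 < k+1 by omega)]
    push_cast; ring)]
  rw [ext1 (M+1) (M+4) _ (by omega) (fun k hk => by
    rw [Nat.choose_eq_zero_of_lt (show M+1 < k+1 by omega)]
    push_cast; ring)]
  rw [ext2 (M+1) (M+3) _ (by omega) (fun k hk => by
    rw [Nat.choose_eq_zero_of_lt (show M+1 < k+1 by omega)]
    push_cast; ring)]
  rw [shift1, shift1, shift2, shift1]
  rw [← Finset.sum_add_distrib, ← Finset.sum_sub_distrib, ← Finset.sum_add_distrib,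
    ← Finset.sum_sub_distrib]
  apply Finset.sum_congr rfl
  intro k hk
  have h3c : ((↑(M+3):ℚ)) = (M:ℚ)+3 := by push_cast; ring
  have h2c : ((↑(M+2):ℚ)) = (M:ℚ)+2 := by push_cast; ring
  have h1c : ((↑(M+1):ℚ)) = (M:ℚ)+1 := by push_cast; ring
  have hone : ((M:ℚ)+1)*((M:ℚ)+1)⁻¹ = 1 := mul_inv_cancel₀ (by positivity)
  have key := keyCoef M k
  rw [div_eq_mul_inv, div_eq_mul_inv] at key
  have hc : ((↑M + 4) * ((↑(M + 3):ℚ))⁻¹ * (↑((M + 3).choose k) * ↑((M + 3).choose (k + 1))))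
      = ((2 * (↑M:ℚ) + 5) * (↑(M + 2))⁻¹ * (↑((M + 2).choose k) * ↑((M + 2).choose (k + 1))))
        + sh (fun k => (2 * ↑M + 5) * (↑(M + 2))⁻¹ * (↑((M + 2).choose k) * ↑((M + 2).choose (k + 1)))) k
        - ((((↑M:ℚ) + 1) * (↑(M + 1))⁻¹ * (↑((M + 1).choose k) * ↑((M + 1).choose (k + 1))))
          - sh (fun k => (↑M + 1) * (↑(M + 1))⁻¹ * (↑((M + 1).choose k) * ↑((M + 1).choose (k + 1))) * 2) k
          + sh (sh fun k => (↑M + 1) * (↑(M + 1))⁻¹ * (↑((M + 1).choose k) * ↑((M + 1).choose (k + 1)))) k) := by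
    simp only [sh_mul_left', sh_mul_right', h3c, h2c, h1c, hone, one_mul]
    linear_combination key
  rw [hc]
  module

end

open PowerSeries in
theorem stmt2 {R : Type*} [CommRing R] [Algebra ℚ R] (α β : R)
    (g : ℕ → R) (hg0 : g 0 = 1)
    (hg : ∀ n : ℕ, 1 ≤ n →
      g n = ((n : ℚ)⁻¹) • ∑ k ∈ Finset.range n,
        ((n.choose k : ℚ) * (n.choose (k + 1) : ℚ)) • (β ^ (n - k) * α ^ k)) :
    (PowerSeries.C (2 * α) * PowerSeries.X * PowerSeries.mk g - 1 -
          PowerSeries.C (α - β) * PowerSeries.X) ^ 2 =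
      1 - PowerSeries.C (2 * (α + β)) * PowerSeries.X +
        PowerSeries.C ((α - β) ^ 2) * PowerSeries.X ^ 2 := by
  set Gs : R⟦X⟧ := PowerSeries.C (2 * α) * PowerSeries.X * PowerSeries.mk g - 1 -
      PowerSeries.C (α - β) * PowerSeries.X with hGsdef
  set P : R⟦X⟧ := 1 - PowerSeries.C (2 * (α + β)) * PowerSeries.X +
      PowerSeries.C ((α - β) ^ 2) * PowerSeries.X ^ 2 with hPdef
  have hX0 : ∀ φ : R⟦X⟧, coeff 0 (X * φ) = 0 := fun φ => by
    rw [mul_comm]; exact coeff_zero_mul_X φ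
  have hg1 : g 1 = β := by
    rw [hg 1 (by norm_num)]
    simp
  have hg2 : g 2 = β*β + α*β := by
    rw [hg 2 (by norm_num)]
    rw [Finset.sum_range_succ, Finset.sum_range_one]
    norm_num [smul_add, smul_smul]
    ring
  have hc0 : coeff 0 Gs = -1 := by
    simp [hGsdef, mul_assoc, hX0, coeff_zero_eq_constantCoeff_apply]
  have hc1 : coeff 1 Gs = α + β := by
    simp [hGsdef, mul_assoc, coeff_succ_X_mul, coeff_C_mul, coeff_one, coeff_X, hg0]
    ring
  have hcs : ∀ n : ℕ, coeff (n+2) Gs = 2*α*g (n+1) := by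
    intro n
    simp [hGsdef, mul_assoc, coeff_succ_X_mul, coeff_C_mul, coeff_one, coeff_X]
  have ratsmul : ∀ (q : ℚ) (x : R), q • x = algebraMap ℚ R q * x := fun q x => Algebra.smul_def q x
  have hRec : ∀ n : ℕ, ((n:ℚ)+2) • coeff (n+2) Gs
      = (2*(n:ℚ)+1) • ((α+β) * coeff (n+1) Gs) - ((n:ℚ)-1) • ((α-β)^2 * coeff n Gs) := by
    intro n
    match n with
    | 0 =>
      rw [hcs 0, hc1, hc0, hg1]
      rw [ratsmul, ratsmul, ratsmul]
      norm_num [map_ofNat]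
      ring
    | 1 =>
      rw [hcs 1, hcs 0, hc1, hg2, hg1]
      rw [ratsmul, ratsmul, ratsmul]
      norm_num [map_ofNat]
      ring
    | (m+2) =>
      rw [hcs (m+2), hcs (m+1), hcs m]
      have h := gRecAux α β g hg m
      have c1 : ((↑(m+2):ℚ)+2) = (m:ℚ)+4 := by push_cast; ring
      have c2 : (2*(↑(m+2):ℚ)+1) = 2*(m:ℚ)+5 := by push_cast; ring
      have c3 : ((↑(m+2):ℚ)-1) = (m:ℚ)+1 := by push_cast; ring
      rw [c1, c2, c3]
      rw [ratsmul, ratsmul, ratsmul] at h ⊢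
      linear_combination 2*α*h
  have hPW : ∀ W : R⟦X⟧, P * W = W - C (2*(α+β)) * (X*W) + C ((α-β)^2) * (X*(X*W)) := by
    intro W; rw [hPdef]; ring
  have hP0 : ∀ W : R⟦X⟧, coeff 0 (P*W) = coeff 0 W := by
    intro W; rw [hPW]
    simp only [map_sub, map_add, coeff_C_mul, hX0, mul_zero, sub_zero, add_zero]
  have hP1 : ∀ W : R⟦X⟧, coeff 1 (P*W) = coeff 1 W - 2*(α+β)*coeff 0 W := by
    intro W; rw [hPW]
    simp only [map_sub, map_add, coeff_C_mul, coeff_succ_X_mul, hX0, mul_zero, add_zero]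
  have hP2 : ∀ (W : R⟦X⟧) (n : ℕ), coeff (n+2) (P*W)
      = coeff (n+2) W - 2*(α+β)*coeff (n+1) W + (α-β)^2*coeff n W := by
    intro W n; rw [hPW]
    simp only [map_sub, map_add, coeff_C_mul, coeff_succ_X_mul]
  have hdP : d⁄dX R P = C ((α-β)^2) * (X + X) - C (2*(α+β)) := by
    have hdX2 : d⁄dX R ((X:R⟦X⟧)^2) = X + X := by
      rw [pow_two, Derivation.leibniz, smul_eq_mul, derivative_X, mul_one]
    rw [hPdef]
    simp only [map_add, map_sub, hdX2, Derivation.leibniz, Derivation.map_one_eq_zero,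
      derivative_X, derivative_C, smul_eq_mul]
    ring
  have hdPW0 : ∀ W : R⟦X⟧, coeff 0 (d⁄dX R P * W) = -(2*(α+β))*coeff 0 W := by
    intro W
    have e : d⁄dX R P * W = C ((α-β)^2)*(X*W) + C ((α-β)^2)*(X*W) - C (2*(α+β))*W := by
      rw [hdP]; ring
    rw [e]
    simp only [map_sub, map_add, coeff_C_mul, hX0, mul_zero, zero_add, add_zero, zero_sub]
    ring
  have hdPW1 : ∀ (W : R⟦X⟧) (n : ℕ), coeff (n+1) (d⁄dX R P * W)
      = 2*((α-β)^2*coeff n W) - 2*(α+β)*coeff (n+1) W := by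
    intro W n
    have e : d⁄dX R P * W = C ((α-β)^2)*(X*W) + C ((α-β)^2)*(X*W) - C (2*(α+β))*W := by
      rw [hdP]; ring
    rw [e]
    simp only [map_sub, map_add, coeff_C_mul, coeff_succ_X_mul]
    ring
  have hA : (2:R⟦X⟧) * (P * d⁄dX R Gs) = d⁄dX R P * Gs := by
    have h2C : (2:R⟦X⟧) = C 2 := by rw [map_ofNat]
    ext n
    rw [h2C, coeff_C_mul]
    match n with
    | 0 =>
      rw [hP0, hdPW0, coeff_derivative, hc1, hc0]
      push_cast
      ring
    | 1 =>
      rw [hP1, hdPW1 Gs 0, coeff_derivative, coeff_derivative, hcs 0, hc1, hc0, hg1]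
      push_cast
      ring
    | (m+2) =>
      rw [hP2 _ m, hdPW1 Gs (m+1), coeff_derivative, coeff_derivative, coeff_derivative]
      have hR' := hRec (m+1)
      rw [ratsmul, ratsmul, ratsmul] at hR'
      simp only [map_add, map_sub, map_mul, map_one, map_ofNat, map_natCast] at hR'
      push_cast at hR' ⊢
      linear_combination 2*hR'
  have hdQ : d⁄dX R (Gs^2 - P) = (Gs * d⁄dX R Gs + Gs * d⁄dX R Gs) - d⁄dX R P := by
    rw [map_sub, sq, Derivation.leibniz, smul_eq_mul]
  have hB : P * d⁄dX R (Gs^2 - P) = d⁄dX R P * (Gs^2 - P) := by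
    rw [hdQ]; linear_combination Gs * hA
  have hq0 : coeff 0 (Gs^2 - P) = 0 := by
    have hcc : constantCoeff Gs = -1 := by rw [← coeff_zero_eq_constantCoeff_apply]; exact hc0
    rw [map_sub, hPdef]
    simp [coeff_zero_eq_constantCoeff_apply, map_pow, hcc, map_add, map_sub, map_mul,
      constantCoeff_X]
  have hq1 : coeff 1 (Gs^2 - P) = 0 := by
    have hb := congrArg (coeff 0) hB
    rw [hP0, hdPW0, coeff_derivative, hq0] at hb
    push_cast at hb
    simpa using hb
  have step : ∀ n, coeff n (Gs^2-P) = 0 → coeff (n+1) (Gs^2-P) = 0 →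
      coeff (n+2) (Gs^2-P) = 0 := by
    intro n h0' h1'
    have hb := congrArg (coeff (n+1)) hB
    have key : coeff (n+2) (Gs^2-P) * ((n+2:ℕ):R) = 0 := by
      match n with
      | 0 =>
        rw [hP1, coeff_derivative, coeff_derivative, hdPW1 _ 0, h0', h1'] at hb
        push_cast at hb ⊢
        linear_combination hb
      | (m+1) =>
        rw [hP2 _ m, coeff_derivative, coeff_derivative, coeff_derivative,
          hdPW1 _ (m+1), h0', h1'] at hb
        push_cast at hb ⊢
        linear_combination hb
    have hsm : (((n+2:ℕ)):ℚ) • coeff (n+2) (Gs^2-P) = 0 := by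
      rw [ratsmul, map_natCast, mul_comm]; exact key
    have h2 := congrArg (fun y => ((((n+2:ℕ)):ℚ))⁻¹ • y) hsm
    simp only [smul_smul,
      inv_mul_cancel₀ (show (((n+2:ℕ)):ℚ) ≠ 0 from Nat.cast_ne_zero.mpr (by omega)),
      one_smul, smul_zero] at h2
    exact h2
  have hall : ∀ n, coeff n (Gs^2 - P) = 0 := by
    intro n
    induction n using Nat.twoStepInduction with
    | zero => exact hq0
    | one => exact hq1
    | more k ih1 ih2 => exact step k ih1 ih2
  have hfin : Gs^2 - P = 0 := PowerSeries.ext fun n => by rw [hall n, map_zero]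
  exact sub_eq_zero.mp hfin
end

section
/- For n ≥ 1 and 1 ≤ k < n, the coefficient A_k^{(n)} defined by the expansion g_n(x) = Σ_{k=0}^{n-1} A_k^{(n)} (α−β)^{−k} (x−β)^k equals (n−k) Σ_{j=1}^{k} (1/j) C(n−1, j−1) C(k−1, j−1) α^j β^{n−j}, and A_0^{(n)} = β^n. -/
/-!
Substituting `x = β + (α - β) y` turns `g_n` into `T_n(y) = ∑ₖ A_k^{(n)} yᵏ` and the recurrence into
`(y - 1) T_{n+1} = α g_n(α) y^{n+1} - ((α - β) y + β) T_n`. Comparing coefficients gives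
`A_0^{(n+1)} = β A_0^{(n)}` and the Pascal-type rule
`A_{k+1}^{(n+1)} = A_k^{(n+1)} + (α - β) A_k^{(n)} + β A_{k+1}^{(n)}` for `k < n`,
while `A_n^{(n)} = 0`.
The closed form obeys the same rules: written as a binary form `∑ⱼ cⱼ αʲ βⁿ⁻ʲ`, the rule becomes,
coefficient by coefficient, an identity between products of binomial coefficients that follows from
`(i + 1) C(N, i + 1) = (N - i) C(N, i)`.
-/

open Polynomial Finset

theorem Nat.cast_choose_succ_mul {R : Type*} [CommRing R] (n i : ℕ) :
    (n.choose (i + 1) : R) * (i + 1) = n.choose i * (n - i) := by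
  rcases le_or_gt i n with hin | hni
  · have h := congrArg (Nat.cast (R := R)) (Nat.choose_succ_right_eq n i)
    push_cast [Nat.cast_sub hin] at h
    exact h
  · simp [Nat.choose_eq_zero_of_lt hni, Nat.choose_eq_zero_of_lt (hni.trans (Nat.lt_succ_self i))]

theorem Nat.cast_choose_cross_sub {R : Type*} [CommRing R] (n m i : ℕ) :
    ((i : R) + 1) * (n.choose (i + 1) * m.choose i - n.choose i * m.choose (i + 1))
      = (n - m) * n.choose i * m.choose i := by
  linear_combination (m.choose i : R) * Nat.cast_choose_succ_mul (R := R) n i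
    - (n.choose i : R) * Nat.cast_choose_succ_mul (R := R) m i

section

variable {K : Type*} [Field K]

-- The coefficient of `α ^ j * β ^ (n - j)` in `A_k^{(n)}`; the term `j = 0` vanishes as `0⁻¹ = 0`.
def coeffTerm (n k j : ℕ) : K :=
  ((n : K) - k) * (j : K)⁻¹ * ((n - 1).choose (j - 1) : K) * ((k - 1).choose (j - 1) : K)

@[simp]
theorem coeffTerm_zero (n k : ℕ) : (coeffTerm n k 0 : K) = 0 := by
  simp [coeffTerm]

theorem coeffTerm_one (n k : ℕ) : (coeffTerm n k 1 : K) = n - k := by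
  simp [coeffTerm]

theorem coeffTerm_succ_succ [CharZero K] {n k : ℕ} (hn : 1 ≤ n) (hk : 1 ≤ k) (j : ℕ) :
    (coeffTerm (n + 1) (k + 1) j : K) = coeffTerm (n + 1) k j + coeffTerm n k (j - 1)
      - coeffTerm n k j + coeffTerm n (k + 1) j := by
  obtain ⟨N, rfl⟩ := Nat.exists_eq_add_of_le' hn
  obtain ⟨M, rfl⟩ := Nat.exists_eq_add_of_le' hk
  rcases j with _ | _ | i
  · simp
  · rw [coeffTerm_one, coeffTerm_one, coeffTerm_one, coeffTerm_one, Nat.sub_self, coeffTerm_zero]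
    push_cast
    ring
  · have hi₁ : ((i : K) + 1) ≠ 0 := Nat.cast_add_one_ne_zero i
    have hi₂ : ((i : K) + 1 + 1) ≠ 0 := by exact_mod_cast Nat.cast_add_one_ne_zero (R := K) (i + 1)
    simp only [coeffTerm, Nat.add_sub_cancel, Nat.choose_succ_succ]
    push_cast
    field_simp
    simp only [Nat.succ_eq_add_one]
    linear_combination (Nat.cast_choose_cross_sub (R := K) N M i)

def binaryForm (α β : K) (n : ℕ) (f : ℕ → K) : K :=
  ∑ j ∈ range (n + 1), f j * α ^ j * β ^ (n - j)

theorem mul_binaryForm_left (α β : K) (n : ℕ) {f : ℕ → K} (hf : f 0 = 0) :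
    α * binaryForm α β n f = binaryForm α β (n + 1) (fun j => f (j - 1)) := by
  rw [binaryForm, binaryForm, sum_range_succ' _ (n + 1), mul_sum]
  simp only [Nat.add_sub_cancel, Nat.zero_sub, hf, zero_mul, add_zero, Nat.add_sub_add_right]
  exact sum_congr rfl fun j _ => by ring

theorem mul_binaryForm_right (α β : K) (n : ℕ) {f : ℕ → K} (hf : f (n + 1) = 0) :
    β * binaryForm α β n f = binaryForm α β (n + 1) f := by
  rw [binaryForm, binaryForm, sum_range_succ _ (n + 1), hf, zero_mul, zero_mul, add_zero, mul_sum]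
  refine sum_congr rfl fun j hj => ?_
  rw [Nat.sub_add_comm (Nat.lt_succ_iff.mp (mem_range.mp hj)), pow_succ]
  ring

def closedCoeff (α β : K) (n k : ℕ) : K :=
  if k = 0 then β ^ n
  else ((n : K) - k) * ∑ j ∈ Icc 1 k,
    (j : K)⁻¹ * ((n - 1).choose (j - 1) : K) * ((k - 1).choose (j - 1) : K) * α ^ j * β ^ (n - j)

@[simp]
theorem closedCoeff_zero (α β : K) (n : ℕ) : closedCoeff α β n 0 = β ^ n :=
  if_pos rfl

theorem closedCoeff_eq_binaryForm (α β : K) {n k : ℕ} (hk : 1 ≤ k) (hkn : k ≤ n) :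
    closedCoeff α β n k = binaryForm α β n (coeffTerm n k) := by
  rw [closedCoeff, if_neg (by omega), binaryForm, mul_sum]
  refine sum_subset (fun j hj => ?_) (fun j _ hj => ?_) |>.trans
    (sum_congr rfl fun j _ => by rw [coeffTerm]; ring)
  · simp only [mem_Icc, mem_range] at hj ⊢; omega
  · rcases Nat.eq_zero_or_pos j with rfl | hj0
    · simp
    · have hkj : k < j := by simp only [mem_Icc, not_and, not_le] at hj; exact hj hj0
      simp [Nat.choose_eq_zero_of_lt (show k - 1 < j - 1 by omega)]

theorem closedCoeff_succ_succ [CharZero K] (α β : K) {n k : ℕ} (hkn : k < n) :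
    closedCoeff α β (n + 1) (k + 1) = closedCoeff α β (n + 1) k + (α - β) * closedCoeff α β n k
      + β * closedCoeff α β n (k + 1) := by
  rcases Nat.eq_zero_or_pos k with rfl | hk
  · obtain ⟨m, rfl⟩ := Nat.exists_eq_add_of_le' hkn
    have hone (n : ℕ) : closedCoeff α β n 1 = ((n : K) - 1) * (α * β ^ (n - 1)) := by
      simp [closedCoeff]
    rw [hone, hone, closedCoeff_zero, closedCoeff_zero, Nat.add_sub_cancel, Nat.add_sub_cancel]
    push_cast
    ring
  · have hn : 1 ≤ n := by omega
    have hvanish (i : ℕ) : coeffTerm n i (n + 1) = (0 : K) := by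
      simp [coeffTerm, Nat.choose_eq_zero_of_lt (show n - 1 < n by omega)]
    rw [closedCoeff_eq_binaryForm α β hk hkn.le, closedCoeff_eq_binaryForm α β hk (by omega),
      closedCoeff_eq_binaryForm α β (by omega) hkn,
      closedCoeff_eq_binaryForm α β (by omega) (by omega), sub_mul,
      mul_binaryForm_left α β n (coeffTerm_zero n k), mul_binaryForm_right α β n (hvanish k),
      mul_binaryForm_right α β n (hvanish (k + 1))]
    simp only [binaryForm, ← sum_add_distrib, ← sum_sub_distrib]
    refine sum_congr rfl fun j _ => ?_
    linear_combination (α ^ j * β ^ (n + 1 - j)) * coeffTerm_succ_succ (K := K) hn hk j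

theorem X_sub_C_pow_comp_C_mul_X_add_C (t β : K) (k : ℕ) :
    ((X - C β) ^ k).comp (C t * X + C β) = C (t ^ k) * X ^ k := by
  simp [pow_comp, sub_comp, mul_pow]

theorem comp_C_mul_X_add_C_of_rec {α β : K} (hαβ : α ≠ β) {p q : K[X]} {n : ℕ}
    (h : (X - C α) * C ((α - β) ^ n) * p =
      C α * (X - C β) ^ (n + 1) * C (q.eval α) - X * C ((α - β) ^ (n + 1)) * q) :
    (X - 1) * p.comp (C (α - β) * X + C β) =
      C (α * q.eval α) * X ^ (n + 1) - (C (α - β) * X + C β) * q.comp (C (α - β) * X + C β) := by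
  have hcomp := congrArg (fun r => r.comp (C (α - β) * X + C β)) h
  simp only [mul_comp, sub_comp, X_comp, C_comp, X_sub_C_pow_comp_C_mul_X_add_C] at hcomp
  have ht : C ((α - β) ^ (n + 1)) ≠ 0 := C_ne_zero.mpr (pow_ne_zero _ (sub_ne_zero.mpr hαβ))
  refine mul_left_cancel₀ ht ?_
  simp only [C_mul, C_pow, C_sub] at hcomp ⊢
  linear_combination hcomp

theorem coeff_zero_eq_of_X_sub_one_mul_eq {R : Type*} [CommRing R] {P Q : R[X]} {c t β : R}
    {m : ℕ} (h : (X - 1) * P = C c * X ^ (m + 1) - (C t * X + C β) * Q) :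
    P.coeff 0 = β * Q.coeff 0 := by
  simpa [sub_mul, add_mul, coeff_X_pow] using congrArg (coeff · 0) h

theorem coeff_succ_eq_of_X_sub_one_mul_eq {R : Type*} [CommRing R] {P Q : R[X]} {c t β : R}
    {m : ℕ} (h : (X - 1) * P = C c * X ^ (m + 1) - (C t * X + C β) * Q) {k : ℕ} (hkm : k < m) :
    P.coeff (k + 1) = P.coeff k + t * Q.coeff k + β * Q.coeff (k + 1) := by
  have hcoeff := congrArg (coeff · (k + 1)) h
  simp only [sub_mul, one_mul, coeff_sub, coeff_X_mul, add_mul, mul_assoc, coeff_C_mul, coeff_X_pow,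
    Nat.add_right_cancel_iff, hkm.ne, ↓reduceIte, mul_zero, coeff_add, zero_sub] at hcoeff
  linear_combination -hcoeff

theorem coeff_comp_C_mul_X_add_C_of_eq_sum {t β : K} (ht : t ≠ 0) {p : K[X]} {a : ℕ → K}
    {n : ℕ} (hp : p = ∑ k ∈ range n, C (a k * t⁻¹ ^ k) * (X - C β) ^ k) (k : ℕ) :
    (p.comp (C t * X + C β)).coeff k = if k < n then a k else 0 := by
  have hterm : ∀ i, C (a i * t⁻¹ ^ i) * C (t ^ i) = C (a i) := fun i => by
    rw [← C_mul, inv_pow, mul_assoc, inv_mul_cancel₀ (pow_ne_zero _ ht), mul_one]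
  simp only [hp, Polynomial.sum_comp, mul_comp, C_comp, X_sub_C_pow_comp_C_mul_X_add_C,
    ← mul_assoc, hterm, finsetSum_coeff, coeff_C_mul_X_pow, sum_ite_eq, mem_range]

theorem eq_closedCoeff_of_rec [CharZero K] (α β : K) (a : ℕ → ℕ → K) (h00 : a 0 0 = 1)
    (hzero : ∀ n, a (n + 1) 0 = β * a n 0)
    (hsucc : ∀ n k, k < n → a (n + 1) (k + 1) = a (n + 1) k + (α - β) * a n k + β * a n (k + 1))
    (hdiag : ∀ n, a (n + 1) (n + 1) = 0) (n k : ℕ) (hkn : k ≤ n) :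
    a n k = closedCoeff α β n k := by
  induction n generalizing k with
  | zero =>
    obtain rfl : k = 0 := by omega
    simp [h00]
  | succ n ih =>
    induction k with
    | zero => rw [hzero, ih 0 n.zero_le, closedCoeff_zero, closedCoeff_zero, pow_succ, mul_comm]
    | succ k ihk =>
      rcases Nat.lt_or_ge k n with hkn' | hnk
      · rw [hsucc n k hkn', ihk (by omega), ih k hkn'.le, ih (k + 1) hkn',
          closedCoeff_succ_succ α β hkn']
      · obtain rfl : k = n := by omega
        simp [hdiag, closedCoeff]

end

theorem stmt4 {K : Type*} [Field K] [CharZero K] (α β : K) (hαβ : α ≠ β)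
    (g : ℕ → Polynomial K) (hg0 : g 0 = 1)
    (hrec : ∀ n : ℕ, 1 ≤ n →
      (Polynomial.X - Polynomial.C α) * Polynomial.C ((α - β) ^ (n - 1)) * g n =
        Polynomial.C α * (Polynomial.X - Polynomial.C β) ^ n * Polynomial.C ((g (n - 1)).eval α) -
          Polynomial.X * Polynomial.C ((α - β) ^ n) * g (n - 1))
    (A : ℕ → ℕ → K)
    (hA : ∀ n : ℕ, 1 ≤ n →
      g n = ∑ k ∈ Finset.range n,
        Polynomial.C (A n k * ((α - β)⁻¹) ^ k) * (Polynomial.X - Polynomial.C β) ^ k) :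
    ∀ n : ℕ, 1 ≤ n →
      A n 0 = β ^ n ∧
        ∀ k : ℕ, 1 ≤ k → k < n →
          A n k = ((n : K) - (k : K)) * ∑ j ∈ Finset.Icc 1 k,
            (j : K)⁻¹ * ((n - 1).choose (j - 1) : K) * ((k - 1).choose (j - 1) : K) *
              α ^ j * β ^ (n - j) := by
  let T (n : ℕ) : K[X] := (g n).comp (C (α - β) * X + C β)
  have hcoeff (n : ℕ) (hn : 1 ≤ n) (k : ℕ) : (T n).coeff k = if k < n then A n k else 0 :=
    coeff_comp_C_mul_X_add_C_of_eq_sum (sub_ne_zero.mpr hαβ) (hA n hn) k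
  have hrecT (n : ℕ) :
      (X - 1) * T (n + 1) = C (α * (g n).eval α) * X ^ (n + 1) - (C (α - β) * X + C β) * T n :=
    comp_C_mul_X_add_C_of_rec hαβ (by simpa using hrec (n + 1) n.succ_pos)
  have hclosed := eq_closedCoeff_of_rec α β (fun n k => (T n).coeff k) (by simp [T, hg0])
    (fun n => coeff_zero_eq_of_X_sub_one_mul_eq (hrecT n))
    (fun n _ hk => coeff_succ_eq_of_X_sub_one_mul_eq (hrecT n) hk)
    (fun n => by simp [hcoeff (n + 1) n.succ_pos])
  intro n hn
  refine ⟨?_, fun k hk hkn => ?_⟩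
  · simpa [hcoeff n hn, show 0 < n from hn] using hclosed n 0 n.zero_le
  · simpa [hcoeff n hn, hkn, closedCoeff, Nat.one_le_iff_ne_zero.mp hk] using hclosed n k hkn.le
end

section
/- Lagrange inversion consequence: if y = tΦ(y) with Φ(y) = ((α−β)yw + β)/(1−yw), then [t^n] 1/(1−y(t)) = (1/n)[z^{n−1}] (Φ(z))^n / (1−z)² for all n ≥ 1. -/
/-! Write `y = X * u` with `u = Φ(y)` a unit. The residue identity
`[X^N] (y ^ i * u⁻¹ ^ (N + 1) * y') = δ_{i,N}` (the power-series form of `res y^(i-N-1) dy = δ`)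
evaluates `[X^(n-1)] y^(k-1) y' = [X^(n-1)] (y^(k-1) y' u⁻ⁿ) uⁿ` once `uⁿ = Φⁿ(y)` is expanded in
powers of `y`, giving `n [Xⁿ] yᵏ = k [X^(n-k)] Φⁿ`. Summing against the coefficients of `H` gives
`n [Xⁿ] H(y) = [X^(n-1)] H' Φⁿ`, and `H = (1 - X)⁻¹` is the theorem. -/

open Finset

namespace PowerSeries

section Subst

variable {R : Type*} [CommRing R] {a : R⟦X⟧}

theorem coeff_pow_mul_eq_zero_of_lt (ha : constantCoeff a = 0) (g : R⟦X⟧) {m n : ℕ}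
    (h : m < n) : coeff m (a ^ n * g) = 0 := by
  have hdvd : X ^ n ∣ a ^ n * g := (pow_dvd_pow_of_dvd (X_dvd_iff.mpr ha) n).mul_right g
  exact X_pow_dvd_iff.mp hdvd m h

theorem subst_eq_sum_add_pow_mul (ha : HasSubst a) (f : R⟦X⟧) (n : ℕ) :
    ∃ g : R⟦X⟧, f.subst a = ∑ j ∈ range (n + 1), C (coeff j f) * a ^ j + a ^ (n + 1) * g := by
  refine ⟨(mk fun i ↦ coeff (i + (n + 1)) f).subst a, ?_⟩
  conv_lhs => rw [eq_X_pow_mul_shift_add_trunc (n + 1) f]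
  rw [subst_add ha, subst_mul ha, subst_pow ha, subst_X ha, subst_coe ha,
    Polynomial.aeval_eq_sum_range' (natDegree_trunc_lt f n), add_comm]
  congr 1
  refine sum_congr rfl fun j hj ↦ ?_
  rw [coeff_trunc, if_pos (mem_range.mp hj), smul_eq_C_mul]

theorem coeff_subst_eq_sum (ha : constantCoeff a = 0) (f : R⟦X⟧) (n : ℕ) :
    coeff n (f.subst a) = ∑ j ∈ range (n + 1), coeff j f * coeff n (a ^ j) := by
  obtain ⟨g, hg⟩ := subst_eq_sum_add_pow_mul (HasSubst.of_constantCoeff_zero' ha) f n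
  simp only [hg, map_add, map_sum, coeff_C_mul, coeff_pow_mul_eq_zero_of_lt ha g n.lt_succ_self,
    add_zero]

theorem subst_C_eq (r : R) : (C r).subst a = C r :=
  subst_C r

theorem constantCoeff_subst_of_constantCoeff_eq_zero (ha : constantCoeff a = 0) (f : R⟦X⟧) :
    constantCoeff (f.subst a) = constantCoeff f := by
  simpa using coeff_subst_eq_sum ha f 0

theorem subst_inv {K : Type*} [Field K] {a : K⟦X⟧} (ha : HasSubst a) {f : K⟦X⟧}
    (hf : constantCoeff f ≠ 0) : f⁻¹.subst a = (f.subst a)⁻¹ := by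
  have h : f⁻¹.subst a * f.subst a = 1 := by
    rw [← subst_mul ha, PowerSeries.inv_mul_cancel f hf, ← coe_substAlgHom ha, map_one]
  have hfa : constantCoeff (f.subst a) ≠ 0 :=
    right_ne_zero_of_mul_eq_one (by rw [← map_mul, h, map_one])
  rwa [eq_inv_iff_mul_eq_one hfa]

end Subst

section Lagrange

variable {K : Type*} [Field K] [CharZero K]

theorem coeff_inv_pow_succ_mul_derivative_X_mul {u : K⟦X⟧} (hu : constantCoeff u ≠ 0) (r : ℕ) :
    coeff r (u⁻¹ ^ (r + 1) * d⁄dX K (X * u)) = if r = 0 then 1 else 0 := by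
  have hvu : u⁻¹ * u = 1 := PowerSeries.inv_mul_cancel u hu
  have hsplit : u⁻¹ ^ (r + 1) * d⁄dX K (X * u) = u⁻¹ ^ r + X * (u⁻¹ ^ (r + 1) * d⁄dX K u) := by
    rw [Derivation.leibniz, derivative_X, smul_eq_mul, smul_eq_mul]
    linear_combination u⁻¹ ^ r * hvu
  -- for `r = s + 1` the right side of `hsplit` is `v ^ r - X (v ^ r)' / r` with `v = u⁻¹`
  rcases r with _ | s
  · rw [hsplit]
    simp
  · have hderiv : d⁄dX K (u⁻¹ ^ (s + 1)) = C ((s : K) + 1) * -(u⁻¹ ^ (s + 2) * d⁄dX K u) := by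
      rw [derivative_pow, derivative_inv', Nat.add_sub_cancel]
      simp only [map_add, map_natCast, map_one, Nat.cast_add, Nat.cast_one]
      ring
    have hcoeff := coeff_derivative (u⁻¹ ^ (s + 1)) s
    rw [hderiv, coeff_C_mul, map_neg] at hcoeff
    have hs : (s : K) + 1 ≠ 0 := Nat.cast_add_one_ne_zero s
    rw [hsplit, map_add, coeff_succ_X_mul, if_neg s.succ_ne_zero]
    have h : ((s : K) + 1) * (coeff (s + 1) (u⁻¹ ^ (s + 1)) + coeff s (u⁻¹ ^ (s + 2) * d⁄dX K u))
        = 0 := by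
      linear_combination -hcoeff
    exact (mul_eq_zero.mp h).resolve_left hs

theorem coeff_pow_mul_inv_pow_mul_derivative {u y : K⟦X⟧} (hu : constantCoeff u ≠ 0)
    (hy : y = X * u) (i N : ℕ) :
    coeff N (y ^ i * (u⁻¹ ^ (N + 1) * d⁄dX K y)) = if i = N then 1 else 0 := by
  subst hy
  rcases le_or_gt i N with hiN | hNi
  · obtain ⟨r, rfl⟩ := Nat.exists_eq_add_of_le hiN
    have hvu : u⁻¹ * u = 1 := PowerSeries.inv_mul_cancel u hu
    have hcancel : (X * u) ^ i * u⁻¹ ^ (i + r + 1) = X ^ i * u⁻¹ ^ (r + 1) := by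
      rw [mul_pow, add_assoc, pow_add, ← mul_assoc, mul_assoc (X ^ i), ← mul_pow, mul_comm u,
        hvu, one_pow, mul_one]
    rw [← mul_assoc, hcancel, mul_assoc, add_comm i r, coeff_X_pow_mul,
      coeff_inv_pow_succ_mul_derivative_X_mul hu]
    simp
  · rw [coeff_pow_mul_eq_zero_of_lt (by simp) _ hNi, if_neg hNi.ne']

theorem lagrange_inversion_pow {Φ y : K⟦X⟧} (hΦ : constantCoeff Φ ≠ 0)
    (hy : y = X * Φ.subst y) (k m : ℕ) :
    ((k + m : ℕ) : K) * coeff (k + m) (y ^ k) = k * coeff m (Φ ^ (k + m)) := by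
  have hy0 : constantCoeff y = 0 := by rw [hy]; simp
  set u := Φ.subst y with hu_def
  have hu : constantCoeff u ≠ 0 := by
    rwa [hu_def, constantCoeff_subst_of_constantCoeff_eq_zero hy0]
  rcases k with _ | k
  · rcases m with _ | m <;> simp [coeff_one]
  set N := k + m
  have hs := HasSubst.of_constantCoeff_zero' hy0
  obtain ⟨g, hg⟩ := subst_eq_sum_add_pow_mul hs (Φ ^ (N + 1)) m
  rw [subst_pow hs, ← hu_def] at hg
  have hresidue : coeff N (y ^ k * d⁄dX K y) = coeff m (Φ ^ (N + 1)) := by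
    have huv : u ^ (N + 1) * u⁻¹ ^ (N + 1) = 1 := by
      rw [← mul_pow, PowerSeries.mul_inv_cancel u hu, one_pow]
    have hexpand : y ^ k * d⁄dX K y = ∑ j ∈ range (m + 1),
        C (coeff j (Φ ^ (N + 1))) * (y ^ (k + j) * (u⁻¹ ^ (N + 1) * d⁄dX K y))
          + y ^ (N + 1) * (g * (u⁻¹ ^ (N + 1) * d⁄dX K y)) := by
      calc y ^ k * d⁄dX K y = y ^ k * u ^ (N + 1) * (u⁻¹ ^ (N + 1) * d⁄dX K y) := by
            linear_combination (-(y ^ k * d⁄dX K y)) * huv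
        _ = _ := by
          rw [hg, mul_add, mul_sum, add_mul, sum_mul]
          congr 1
          · refine sum_congr rfl fun j _ ↦ ?_
            ring
          · ring
    rw [hexpand, map_add, coeff_pow_mul_eq_zero_of_lt hy0 _ N.lt_succ_self, add_zero, map_sum]
    simp only [coeff_C_mul, coeff_pow_mul_inv_pow_mul_derivative hu hy, N, Nat.add_left_cancel_iff,
      mul_ite, mul_one, mul_zero, sum_ite_eq', mem_range, lt_add_one, if_true]
  have hder := coeff_derivative (y ^ (k + 1)) N
  rw [derivative_pow, Nat.add_sub_cancel, ← map_natCast (C (R := K)), mul_assoc, coeff_C_mul,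
    hresidue] at hder
  rw [show k + 1 + m = N + 1 by omega]
  push_cast at hder ⊢
  linear_combination -hder

theorem lagrange_inversion {Φ y : K⟦X⟧} (hΦ : constantCoeff Φ ≠ 0)
    (hy : y = X * Φ.subst y) (H : K⟦X⟧) (m : ℕ) :
    ((m + 1 : ℕ) : K) * coeff (m + 1) (H.subst y) = coeff m (d⁄dX K H * Φ ^ (m + 1)) := by
  have hy0 : constantCoeff y = 0 := by rw [hy]; simp
  have hterm : ∀ j ∈ range (m + 2), ((m + 1 : ℕ) : K) * (coeff j H * coeff (m + 1) (y ^ j))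
      = coeff j H * (j * coeff (m + 1 - j) (Φ ^ (m + 1))) := by
    intro j hj
    obtain ⟨r, hr⟩ := Nat.exists_eq_add_of_le (Nat.lt_succ_iff.mp (mem_range.mp hj))
    rw [mul_left_comm, hr, lagrange_inversion_pow hΦ hy, Nat.add_sub_cancel_left]
  rw [coeff_subst_eq_sum hy0, mul_sum, sum_congr rfl hterm, sum_range_succ', coeff_mul,
    Nat.sum_antidiagonal_eq_sum_range_succ_mk]
  simp only [Nat.cast_zero, zero_mul, mul_zero, add_zero, coeff_derivative, Nat.cast_add,
    Nat.cast_one]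
  refine sum_congr rfl fun i hi ↦ ?_
  rw [Nat.add_sub_add_right]
  ring

end Lagrange

end PowerSeries

open PowerSeries in
theorem stmt10 {K : Type*} [Field K] [CharZero K] (α β w : K) (hβ : β ≠ 0)
    (y : PowerSeries K) (hy0 : PowerSeries.coeff 0 y = 0)
    (hy : y * (1 - PowerSeries.C w * y) =
      PowerSeries.X * (PowerSeries.C ((α - β) * w) * y + PowerSeries.C β)) :
    ∀ n : ℕ, 1 ≤ n →
      PowerSeries.coeff n (1 - y)⁻¹ =
        (n : K)⁻¹ * PowerSeries.coeff (n - 1)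
          (((PowerSeries.C ((α - β) * w) * PowerSeries.X + PowerSeries.C β) *
              (1 - PowerSeries.C w * PowerSeries.X)⁻¹) ^ n *
            ((1 - PowerSeries.X)⁻¹) ^ 2) := by
  intro n hn
  obtain ⟨m, rfl⟩ := Nat.exists_eq_add_of_le' hn
  set Φ : K⟦X⟧ := (C ((α - β) * w) * X + C β) * (1 - C w * X)⁻¹
  have hy0' : constantCoeff y = 0 := by rwa [← coeff_zero_eq_constantCoeff_apply]
  have hs := HasSubst.of_constantCoeff_zero' hy0'
  have hΦ0 : constantCoeff Φ ≠ 0 := by simpa [Φ]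
  have hyΦ : y = X * Φ.subst y := by
    have hden : constantCoeff (1 - C w * y) ≠ 0 := by simp [hy0']
    rw [subst_mul hs, subst_inv hs (by simp)]
    simp only [subst_add hs, subst_sub hs, subst_mul hs, subst_X hs, subst_C_eq, ← map_one C]
    rw [map_one, ← mul_assoc, ← hy, mul_assoc, PowerSeries.mul_inv_cancel _ hden, mul_one]
  have hH : ((1 : K⟦X⟧) - X)⁻¹.subst y = (1 - y)⁻¹ := by
    rw [subst_inv hs (by simp), subst_sub hs, subst_X hs, ← map_one C, subst_C_eq, map_one]
  have hH' : d⁄dX K (1 - X : K⟦X⟧)⁻¹ = ((1 - X)⁻¹) ^ 2 := by simp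
  have hlagrange := lagrange_inversion hΦ0 hyΦ (1 - X)⁻¹ m
  rw [hH, mul_comm (d⁄dX K _), hH'] at hlagrange
  rw [Nat.add_sub_cancel, ← hlagrange, inv_mul_cancel_left₀ (Nat.cast_ne_zero.mpr m.succ_ne_zero)]
end

section
/- Morrison's explicit formula: for n ≥ 1 and x ≠ α, g_n(x) = ((α−β)x/(α−x))^n − α Σ_{k=1}^n x^{n−k}(α−x)^{k−1−n}(α−β)^{n+1−2k}(x−β)^k g_{k−1}(α). -/
theorem stmt11 {K : Type*} [Field K] [CharZero K] (α β x : K) (hαβ : α ≠ β) (hxα : x ≠ α)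
    (g : ℕ → Polynomial K) (hg0 : g 0 = 1)
    (hrec : ∀ n : ℕ, 1 ≤ n →
      (Polynomial.X - Polynomial.C α) * Polynomial.C ((α - β) ^ (n - 1)) * g n =
        Polynomial.C α * (Polynomial.X - Polynomial.C β) ^ n * Polynomial.C ((g (n - 1)).eval α) -
          Polynomial.X * Polynomial.C ((α - β) ^ n) * g (n - 1)) :
    ∀ n : ℕ, 1 ≤ n →
      (g n).eval x =
        ((α - β) * x / (α - x)) ^ n -
          α * ∑ k ∈ Finset.Icc 1 n,
            x ^ (n - k) * (α - x) ^ ((k : ℤ) - 1 - (n : ℤ)) *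
              (α - β) ^ ((n : ℤ) + 1 - 2 * (k : ℤ)) * (x - β) ^ k *
              (g (k - 1)).eval α := by
  have hax : α - x ≠ 0 := sub_ne_zero.mpr (Ne.symm hxα)
  have hab : α - β ≠ 0 := sub_ne_zero.mpr hαβ
  intro n hn
  induction n, hn using Nat.le_induction with
  | base =>
    have h := congrArg (Polynomial.eval x) (hrec 1 le_rfl)
    simp [hg0] at h
    rw [Finset.Icc_self, Finset.sum_singleton]
    norm_num [hg0]
    field_simp
    linear_combination -h
  | succ n hn ih =>
    have h := congrArg (Polynomial.eval x) (hrec (n + 1) (by omega))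
    simp at h
    have hsum : ∑ k ∈ Finset.Icc 1 n,
        x ^ (n + 1 - k) * (α - x) ^ ((k : ℤ) - 1 - ((n : ℤ) + 1)) *
          (α - β) ^ ((n : ℤ) + 1 + 1 - 2 * (k : ℤ)) * (x - β) ^ k * Polynomial.eval α (g (k - 1))
        = ((α - β) * x / (α - x)) * ∑ k ∈ Finset.Icc 1 n,
            x ^ (n - k) * (α - x) ^ ((k : ℤ) - 1 - (n : ℤ)) *
              (α - β) ^ ((n : ℤ) + 1 - 2 * (k : ℤ)) * (x - β) ^ k *
              Polynomial.eval α (g (k - 1)) := by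
      rw [Finset.mul_sum]
      refine Finset.sum_congr rfl fun k hk => ?_
      obtain ⟨hk1, hk2⟩ := Finset.mem_Icc.mp hk
      have e1 : n + 1 - k = (n - k) + 1 := by omega
      have e2 : (k : ℤ) - 1 - ((n : ℤ) + 1) = ((k : ℤ) - 1 - (n : ℤ)) - 1 := by ring
      have e3 : (n : ℤ) + 1 + 1 - 2 * (k : ℤ) = ((n : ℤ) + 1 - 2 * (k : ℤ)) + 1 := by ring
      rw [e1, e2, e3, zpow_sub_one₀ hax, zpow_add_one₀ hab, pow_succ]
      field_simp
    refine mul_left_cancel₀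
      (mul_ne_zero (sub_ne_zero.mpr hxα) (pow_ne_zero n hab)) ?_
    rw [h, ih, Finset.sum_Icc_succ_top (by omega : 1 ≤ n + 1)]
    push_cast
    rw [hsum]
    have e4 : ((n : ℤ) + 1 - 1 - ((n : ℤ) + 1)) = -1 := by ring
    have e5 : ((n : ℤ) + 1 + 1 - 2 * ((n : ℤ) + 1)) = -(n : ℤ) := by ring
    rw [e4, e5, zpow_neg_one, zpow_neg, zpow_natCast]
    simp only [Nat.add_sub_cancel, Nat.sub_self, pow_zero, one_mul]
    have hU : (α - x) ^ n ≠ 0 := pow_ne_zero _ hax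
    have hV : (α - β) ^ n ≠ 0 := pow_ne_zero _ hab
    simp only [div_pow, mul_pow, pow_succ]
    field_simp
    ring
end

section
/- Kernel method identity: Σ_{n≥1} (x̄−β)^n t^n g_{n−1}(α) = (x̄−α)/((β−α)α), where x̄ = α/(1 + t(α−β)²), as an identity of formal power series in t. -/
/-!
The numbers `m g_m` are the Narayana polynomials homogenised in `α, β`, so by Pascal's rule
they satisfy the three-term recurrence
`(n+3) g_{n+2} + (α-β)² n g_n = (α+β)(2n+3) g_{n+1}`.
For `H(y) = ∑ g_{n-1} yⁿ` this is the linear differential equation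
`Δ H' + ((α+β) - (α-β)² y) H = 1 - (α-β) y` with `Δ = 1 - 2(α+β) y + (α-β)² y²`.
It forces the kernel equation `α H² + ((β-α) y - 1) H + y = 0`: the left-hand side `P`
satisfies `Δ P' = Δ' P`, so `P / Δ` is a constant, namely `0`.
Substituting `y = t (x̄ - β)` gives a root with zero constant term of the kernel equation in `t`;
`(α-β) t / (1 + (α-β)² t)`, which is the right-hand side, is another one, and such a root is
unique.
-/

section Narayana

open Finset

variable {R : Type*} [CommRing R] {K : Type*} [Field K] [CharZero K]

lemma natCast_choose_succ_right (n k : ℕ) :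
    (n.choose (k + 1) : K) = n.choose k * (n - k) / (k + 1) := by
  rw [eq_div_iff (Nat.cast_add_one_ne_zero k)]
  rcases le_or_gt k n with h | h
  · have := congrArg (Nat.cast : ℕ → K) (Nat.choose_succ_right_eq n k)
    push_cast [Nat.cast_sub h] at this
    exact this
  · simp [Nat.choose_eq_zero_of_lt h, Nat.choose_eq_zero_of_lt (by omega : n < k + 1)]

lemma choose_mul_choose_recurrence (n j : ℕ) :
    ((n + 3) * (n + 1) : K) * ((n + 2).choose (j + 2) * (n + 2).choose (j + 3))
      + ((n + 1) * (n + 2) : K) * (n.choose j * n.choose (j + 1)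
        - 2 * (n.choose (j + 1) * n.choose (j + 2)) + n.choose (j + 2) * n.choose (j + 3))
    = ((2 * n + 3) * (n + 2) : K) * ((n + 1).choose (j + 1) * (n + 1).choose (j + 2)
      + (n + 1).choose (j + 2) * (n + 1).choose (j + 3)) := by
  -- after Pascal's rule every binomial coefficient is a rational multiple of `n.choose j`
  simp only [Nat.choose_succ_succ', Nat.cast_add, natCast_choose_succ_right n (j + 2),
    natCast_choose_succ_right n (j + 1), natCast_choose_succ_right n j]
  push_cast
  have : (j + 1 : K) ≠ 0 := by norm_cast
  have : (j + 1 + 1 : K) ≠ 0 := by norm_cast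
  have : (j + 2 + 1 : K) ≠ 0 := by norm_cast
  field_simp
  ring

open Polynomial

variable (R) in
noncomputable def narayanaPoly (m : ℕ) : R[X] :=
  ∑ k ∈ range m, C (m.choose k * m.choose (k + 1) : R) * X ^ k

lemma coeff_narayanaPoly (m k : ℕ) :
    (narayanaPoly R m).coeff k = m.choose k * m.choose (k + 1) := by
  simp only [narayanaPoly, finsetSum_coeff, coeff_C_mul_X_pow, sum_ite_eq, mem_range]
  split_ifs with h
  · rfl
  · simp [Nat.choose_eq_zero_of_lt (by omega : m < k + 1)]

lemma narayanaPoly_recurrence (n : ℕ) :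
    C ((n + 3) * (n + 1) : K) * narayanaPoly K (n + 2)
      + C ((n + 1) * (n + 2) : K) * ((X - 1) ^ 2 * narayanaPoly K n)
    = C ((2 * n + 3) * (n + 2) : K) * ((X + 1) * narayanaPoly K (n + 1)) := by
  have hsq : ∀ p : K[X], (X - 1) ^ 2 * p = X * (X * p) - C 2 * (X * p) + p := fun p => by
    rw [map_ofNat]; ring
  rw [hsq, add_one_mul X]
  ext (_ | _ | j) <;>
    simp only [coeff_add, coeff_sub, coeff_C_mul, coeff_X_mul, coeff_X_mul_zero, coeff_narayanaPoly]
  · simp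
    ring
  · simp [Nat.cast_choose_two]
    ring
  · exact choose_mul_choose_recurrence n j

def narayanaSum (α β : R) (m : ℕ) : R :=
  ∑ k ∈ range m, (m.choose k : R) * m.choose (k + 1) * β ^ (m - k) * α ^ k

lemma narayanaSum_mul_left_eq_eval (x β : R) (m : ℕ) :
    narayanaSum (x * β) β m = β ^ m * (narayanaPoly R m).eval x := by
  simp only [narayanaSum, narayanaPoly, eval_finsetSum, eval_mul, eval_C, eval_pow, eval_X,
    mul_sum]
  refine sum_congr rfl fun k hk => ?_
  rw [← pow_sub_mul_pow β (mem_range.mp hk).le]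
  ring

lemma narayanaSum_zero_right (α : R) (m : ℕ) : narayanaSum α 0 m = 0 :=
  sum_eq_zero fun k hk => by simp [zero_pow (Nat.sub_ne_zero_of_lt (mem_range.mp hk))]

lemma narayanaSum_recurrence (α β : K) (n : ℕ) :
    ((n + 3) * (n + 1) : K) * narayanaSum α β (n + 2)
      + ((n + 1) * (n + 2) : K) * (α - β) ^ 2 * narayanaSum α β n
    = ((2 * n + 3) * (n + 2) : K) * (α + β) * narayanaSum α β (n + 1) := by
  rcases eq_or_ne β 0 with rfl | hβ
  · simp [narayanaSum_zero_right]
  obtain ⟨x, rfl⟩ : ∃ x, α = x * β := ⟨α / β, (div_mul_cancel₀ α hβ).symm⟩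
  have h := congrArg (eval x) (narayanaPoly_recurrence (K := K) n)
  simp only [eval_add, eval_mul, eval_C, eval_pow, eval_sub, eval_X, eval_one] at h
  simp only [narayanaSum_mul_left_eq_eval]
  linear_combination β ^ (n + 2) * h

lemma recurrence_of_eq_narayanaSum {α β : K} {g : ℕ → K}
    (hg : ∀ m : ℕ, 1 ≤ m → g m = (m : K)⁻¹ * narayanaSum α β m) (n : ℕ) :
    (n + 3 : K) * g (n + 2) + (α - β) ^ 2 * n * g n = (α + β) * (2 * n + 3) * g (n + 1) := by
  have hν : ∀ m : ℕ, (m : K) * g m = narayanaSum α β m := by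
    rintro (_ | m)
    · simp [narayanaSum]
    · rw [hg _ (by omega), mul_inv_cancel_left₀ (Nat.cast_ne_zero.mpr m.succ_ne_zero)]
  have h := narayanaSum_recurrence α β n
  rw [← hν, ← hν, ← hν] at h
  push_cast at h
  have : ((n + 1) * (n + 2) : K) ≠ 0 := by norm_cast
  apply mul_left_cancel₀ this
  linear_combination h

end Narayana

namespace PowerSeries

section KernelEquation

variable {R : Type*} [CommRing R] {K : Type*} [Field K] [CharZero K]

theorem eq_zero_of_mul_derivative_eq_derivative_mul {A f : K⟦X⟧} (hA : constantCoeff A ≠ 0)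
    (hf : constantCoeff f = 0) (h : A * d⁄dX K f = d⁄dX K A * f) : f = 0 := by
  have hAinv : A * A⁻¹ = 1 := PowerSeries.mul_inv_cancel A hA
  have hd : d⁄dX K (f * A⁻¹) = d⁄dX K 0 := by
    rw [Derivation.leibniz, derivative_inv', map_zero, smul_eq_mul, smul_eq_mul]
    linear_combination A⁻¹ ^ 2 * h - A⁻¹ * d⁄dX K f * hAinv
  have hc : f * A⁻¹ = 0 := derivative.ext hd (by simp [hf])
  calc f = f * A⁻¹ * A := by rw [mul_assoc, mul_comm A⁻¹, hAinv, mul_one]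
    _ = 0 := by rw [hc, zero_mul]

def IsKernelRoot (α β : R) (Y F : R⟦X⟧) : Prop :=
  C α * F ^ 2 + (C (β - α) * Y - 1) * F + Y = 0

lemma ode_X_mul_mk_of_recurrence {α β : R} {g : ℕ → R} (hg0 : g 0 = 1) (hg1 : g 1 = β)
    (hrec : ∀ n : ℕ,
      (n + 3 : R) * g (n + 2) + (α - β) ^ 2 * n * g n = (α + β) * (2 * n + 3) * g (n + 1)) :
    (1 - C (2 * (α + β)) * X + C ((α - β) ^ 2) * X ^ 2) * d⁄dX R (X * mk g)
      + (C (α + β) - C ((α - β) ^ 2) * X) * (X * mk g) = 1 - C (α - β) * X := by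
  set s := α + β
  set c := (α - β) ^ 2
  have hexpand : ∀ A B : R⟦X⟧, (1 - C (2 * s) * X + C c * X ^ 2) * A + (C s - C c * X) * B
      = A - C (2 * s) * (X * A) + C c * (X * (X * A)) + C s * B - C c * (X * B) := fun A B => by
    ring
  rw [hexpand]
  ext (_ | _ | n) <;>
    simp only [map_add, map_sub, coeff_C_mul, coeff_succ_X_mul, coeff_zero_X_mul,
      coeff_derivative, coeff_mk, coeff_one]
  · simp [hg0]
  · simp [hg0, hg1]
    ring
  · simp
    linear_combination hrec n

lemma IsKernelRoot.of_ode {α β : K} {H : K⟦X⟧} (hH : constantCoeff H = 0)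
    (hode : (1 - C (2 * (α + β)) * X + C ((α - β) ^ 2) * X ^ 2) * d⁄dX K H
      + (C (α + β) - C ((α - β) ^ 2) * X) * H = 1 - C (α - β) * X) :
    IsKernelRoot α β X H := by
  refine eq_zero_of_mul_derivative_eq_derivative_mul
    (A := 1 - C (2 * (α + β)) * X + C ((α - β) ^ 2) * X ^ 2) (by simp) (by simp [hH]) ?_
  simp only [map_add, map_sub, Derivation.leibniz, Derivation.leibniz_pow, derivative_X,
    derivative_C, smul_eq_mul, Derivation.map_one_eq_zero] at hode ⊢
  simp only [map_mul, map_sub, map_add, map_pow, map_ofNat] at hode ⊢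
  linear_combination (2 * C α * H + (C β - C α) * X - 1) * hode

lemma IsKernelRoot.subst {α β : R} {H Y : R⟦X⟧} (hH : IsKernelRoot α β X H)
    (hY : constantCoeff Y = 0) : IsKernelRoot α β Y (H.subst Y) := by
  unfold IsKernelRoot at hH ⊢
  simpa only [map_add, map_mul, map_pow, map_sub, map_one, map_zero, substAlgHom_X,
    C_eq_algebraMap, AlgHom.commutes, coe_substAlgHom] using
    congrArg (substAlgHom (HasSubst.of_constantCoeff_zero' hY)) hH

lemma IsKernelRoot.eq [IsDomain R] {α β : R} {Y F G : R⟦X⟧} (hF : IsKernelRoot α β Y F)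
    (hG : IsKernelRoot α β Y G) (hY : constantCoeff Y = 0) (hF0 : constantCoeff F = 0)
    (hG0 : constantCoeff G = 0) : F = G := by
  have hprod : (F - G) * (C α * (F + G) + C (β - α) * Y - 1) = 0 := by
    unfold IsKernelRoot at hF hG
    linear_combination hF - hG
  refine sub_eq_zero.mp ((mul_eq_zero.mp hprod).resolve_right fun h => ?_)
  simpa [hY, hF0, hG0] using congrArg constantCoeff h

lemma isKernelRoot_of_mul_eq_one {α β : R} {Q : R⟦X⟧} (hQ : (1 + C ((α - β) ^ 2) * X) * Q = 1) :
    IsKernelRoot α β ((C α * Q - C β) * X) (C (α - β) * X * Q) := by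
  unfold IsKernelRoot
  simp only [map_pow, map_sub] at hQ ⊢
  linear_combination C β * X * hQ

lemma coeff_subst_mul_X {f W : R⟦X⟧} (hf : constantCoeff f = 0) (m : ℕ) :
    coeff m (f.subst (W * X)) = ∑ n ∈ Finset.Icc 1 m, coeff n f * coeff m ((W * X) ^ n) := by
  rw [coeff_subst' (HasSubst.of_constantCoeff_zero' (by simp))]
  refine finsum_eq_sum_of_support_subset _ fun n hn => ?_
  rw [Function.mem_support] at hn
  rw [Finset.coe_Icc, Set.mem_Icc, Nat.one_le_iff_ne_zero]
  constructor
  · rintro rfl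
    simp [hf] at hn
  · by_contra hmn
    rw [mul_pow, coeff_mul_X_pow', if_neg hmn, smul_zero] at hn
    exact hn rfl

end KernelEquation

end PowerSeries

open PowerSeries

theorem stmt14 {K : Type*} [Field K] [CharZero K] (α β : K) (hαβ : α ≠ β) (hα : α ≠ 0)
    (g : ℕ → K) (hg0 : g 0 = 1)
    (hg : ∀ m : ℕ, 1 ≤ m →
      g m = (m : K)⁻¹ * ∑ k ∈ Finset.range m,
        (m.choose k : K) * (m.choose (k + 1) : K) * β ^ (m - k) * α ^ k) :
    ∀ m : ℕ,
      PowerSeries.coeff (R := K) m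
          (∑ n ∈ Finset.Icc 1 m,
            (PowerSeries.C (R := K) α * (1 + PowerSeries.C (R := K) ((α - β) ^ 2) * PowerSeries.X)⁻¹ -
                PowerSeries.C (R := K) β) ^ n * PowerSeries.X ^ n * PowerSeries.C (R := K) (g (n - 1))) =
        PowerSeries.coeff (R := K) m
          ((PowerSeries.C (R := K) α * (1 + PowerSeries.C (R := K) ((α - β) ^ 2) * PowerSeries.X)⁻¹ -
              PowerSeries.C (R := K) α) * PowerSeries.C (R := K) (((β - α) * α)⁻¹)) := by
  intro m
  set Q : K⟦X⟧ := (1 + C ((α - β) ^ 2) * X)⁻¹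
  have hQ : (1 + C ((α - β) ^ 2) * X) * Q = 1 := PowerSeries.mul_inv_cancel _ (by simp)
  set Y := (C α * Q - C β) * X
  have hY : constantCoeff Y = 0 := by simp [Y]
  have hg1 : g 1 = β := by simp [hg 1 le_rfl]
  have hH : IsKernelRoot α β X (X * mk g) := .of_ode (by simp)
    (ode_X_mul_mk_of_recurrence hg0 hg1 (recurrence_of_eq_narayanaSum hg))
  have hS0 : constantCoeff ((X * mk g).subst Y) = 0 := by
    rw [← coeff_zero_eq_constantCoeff_apply, coeff_subst_mul_X (by simp)]
    simp
  have hST : (X * mk g).subst Y = C (α - β) * X * Q :=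
    (hH.subst hY).eq (isKernelRoot_of_mul_eq_one hQ) hY hS0 (by simp)
  have hRHS : (C α * Q - C α) * C ((β - α) * α)⁻¹ = C (α - β) * X * Q := by
    have hc : C ((β - α) * α)⁻¹ * C α * C ((α - β) ^ 2) = -C (α - β) := by
      rw [← map_mul, ← map_mul, ← map_neg]
      congr 1
      field_simp [sub_ne_zero.mpr hαβ.symm]
      ring
    linear_combination C α * C ((β - α) * α)⁻¹ * hQ - X * Q * hc
  rw [hRHS, ← hST, coeff_subst_mul_X (by simp), map_sum]
  refine Finset.sum_congr rfl fun n hn => ?_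
  obtain ⟨k, rfl⟩ := Nat.exists_eq_add_one_of_ne_zero (by simp at hn; omega : n ≠ 0)
  rw [coeff_succ_X_mul, coeff_mk, ← mul_pow, mul_comm, coeff_C_mul, Nat.add_sub_cancel]
end

section
/- Closed form of G(t): the generating function G(t) = Σ_{n≥0}(α−β)^{n−1} g_n(x) t^n equals [1 + t(x−β)(α−β) − √(1 − 2t(x−β)(α+β) + t²(x−β)²(α−β)²) + 2(x−α)/(α−β)] / [2(x−α + x t(α−β)²)], as formal power series in t, where the square root has constant term 1. -/
/-!
Kernel method. Summing the recurrence gives, with `d = α - β` and `C(u) = ∑ gₙ(α) uⁿ`,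
`(X - α + d² t X) · ∑ dⁿ gₙ(X) tⁿ = (X - α) + α d t (X - β) C(t (X - β))`.
At `X = x` this expresses `G` through `C((x - β) t)`. At the root `y = α / (1 + d² t)` of the
kernel it gives `C(s) = 1 / (1 - β d t)` for `s = t (y - β)`; since `s` has a compositional
inverse, `C` satisfies `α (C (1 + d u - α u C) - 1) = 0`. This quadratic relation says exactly that
`1 + (x - β) d t - 2 α (x - β) t C((x - β) t)` squares to the radicand, so it is `S`.
-/

open PowerSeries

namespace PowerSeries

variable {R : Type*} [CommRing R]

theorem subst_injective {P : R⟦X⟧} (hP : constantCoeff P = 0) (hP' : IsUnit (coeff 1 P)) :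
    Function.Injective (subst (R := R) P) := by
  intro f g h
  have hs : HasSubst P := HasSubst.of_constantCoeff_zero' hP
  have hinv := HasSubst.substInvOfIsUnit P hP'
  have key : ∀ f : R⟦X⟧, subst (P.substInvOfIsUnit hP') (subst P f) = f := fun f => by
    rw [subst_comp_subst_apply hs hinv, subst_substInvOfIsUnit_right P hP hP', X_subst]
  rw [← key f, ← key g, h]

theorem X_pow_dvd_subst_sub_sum {P : R⟦X⟧} (hP : constantCoeff P = 0) (f : R⟦X⟧) (N : ℕ) :
    X ^ N ∣ subst P f - ∑ i ∈ Finset.range N, C (coeff i f) * P ^ i := by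
  have hs : HasSubst P := HasSubst.of_constantCoeff_zero' hP
  rw [congrArg (subst P) (eq_X_pow_mul_shift_add_trunc N f), subst_add hs, subst_mul hs,
    subst_pow hs, subst_X hs, subst_coe hs, Polynomial.aeval_def, eval₂_trunc_eq_sum_range]
  convert (pow_dvd_pow_of_dvd (X_dvd_iff.2 hP) N).mul_right
    (subst P (mk fun i => coeff (i + N) f)) using 1
  exact add_sub_cancel_right (P ^ N * subst P (mk fun i => coeff (i + N) f) : R⟦X⟧)
    (∑ i ∈ Finset.range N, C (coeff i f) * P ^ i)

theorem rescale_C (a r : R) : rescale a (C r) = C r := by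
  ext n
  rcases n with _ | n <;> simp [coeff_C]

theorem eq_zero_of_forall_X_pow_dvd {f : R⟦X⟧} (h : ∀ N, X ^ N ∣ f) : f = 0 := by
  ext m
  exact X_pow_dvd_iff.1 (h (m + 1)) m (lt_add_one m)

theorem eq_of_sq_eq_sq [IsDomain R] [NeZero (2 : R)] {f g : R⟦X⟧} (h : f ^ 2 = g ^ 2)
    (hfg : constantCoeff f = constantCoeff g) (hg : constantCoeff g ≠ 0) : f = g := by
  refine (sq_eq_sq_iff_eq_or_eq_neg.1 h).resolve_right fun hneg => hg ?_
  rw [hneg, map_neg, neg_eq_iff_add_eq_zero, ← two_mul] at hfg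
  exact (mul_eq_zero.1 hfg).resolve_left two_ne_zero

end PowerSeries

section

variable {K : Type*} [Field K]

def SolvesRecurrence (α β : K) (g : ℕ → Polynomial K) : Prop :=
  g 0 = 1 ∧ ∀ n, (Polynomial.X - Polynomial.C α) * Polynomial.C ((α - β) ^ n) * g (n + 1) =
    Polynomial.C α * (Polynomial.X - Polynomial.C β) ^ (n + 1) * Polynomial.C ((g n).eval α) -
      Polynomial.X * Polynomial.C ((α - β) ^ (n + 1)) * g n

namespace SolvesRecurrence

variable {α β : K} {g : ℕ → Polynomial K}

/-- Finite form of the kernel method: at a root `y` of the kernel the recurrence telescopes. -/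
theorem kernel_telescope (hg : SolvesRecurrence α β g) {A : Type*} [CommRing A] [Algebra K A]
    {y t : A} (hy : algebraMap K A ((α - β) ^ 2) * t * y = algebraMap K A α - y) (N : ℕ) :
    algebraMap K A (α - β) * y - algebraMap K A α * (y - algebraMap K A β) *
        ∑ k ∈ Finset.range N, algebraMap K A ((g k).eval α) * (t * (y - algebraMap K A β)) ^ k =
      t ^ N * (algebraMap K A ((α - β) ^ (N + 1)) * y * Polynomial.aeval y (g N)) := by
  induction N with
  | zero => simp [hg.1]
  | succ N ih =>
    have h := congrArg (Polynomial.aeval y) (hg.2 N)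
    simp only [map_mul, map_sub, map_pow, Polynomial.aeval_X, Polynomial.aeval_C, mul_pow]
      at h hy ih ⊢
    rw [Finset.sum_range_succ]
    linear_combination ih + t ^ N * h -
      t ^ N * (algebraMap K A α - algebraMap K A β) ^ N * Polynomial.aeval y (g (N + 1)) * hy

theorem mul_subst_eq (hg : SolvesRecurrence α β g) {y : K⟦X⟧}
    (hy : C ((α - β) ^ 2) * X * y = C α - y) (hs : constantCoeff (X * (y - C β)) = 0) :
    C (α - β) * y = C α * (y - C β) * subst (X * (y - C β)) (mk fun n => (g n).eval α) := by
  refine sub_eq_zero.1 (eq_zero_of_forall_X_pow_dvd fun N => ?_)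
  have htel := hg.kernel_telescope (A := K⟦X⟧) hy N
  have hdvd := X_pow_dvd_subst_sub_sum hs (mk fun n => (g n).eval α) N
  have hC : ∀ r : K, algebraMap K K⟦X⟧ r = C r := fun _ => rfl
  simp only [coeff_mk] at hdvd
  simp only [hC] at htel
  convert dvd_sub (htel ▸ dvd_mul_right _ _) (hdvd.mul_left (C α * (y - C β))) using 1
  ring

theorem alpha_mul_quadratic_eq_zero (hg : SolvesRecurrence α β g) (hαβ : α ≠ β) :
    C α * (mk (fun n => (g n).eval α) *
      (1 + C (α - β) * X - C α * X * mk fun n => (g n).eval α) - 1) = 0 := by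
  set c : K⟦X⟧ := mk fun n => (g n).eval α
  have hA : constantCoeff (1 + C ((α - β) ^ 2) * X : K⟦X⟧) ≠ 0 := by simp
  set y := C α * (1 + C ((α - β) ^ 2) * X)⁻¹
  have hy : C ((α - β) ^ 2) * X * y = C α - y := by
    linear_combination C α * PowerSeries.mul_inv_cancel _ hA
  have hy0 : constantCoeff y = α := by simp [y]
  set s := X * (y - C β)
  have hs0 : constantCoeff s = 0 := by simp [s]
  have hs1 : IsUnit (coeff 1 s) := by
    simpa [s, hy0, sub_eq_zero] using hαβ
  have hker := hg.mul_subst_eq hy hs0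
  set W : K⟦X⟧ := subst s c
  set B : K⟦X⟧ := 1 - C (β * (α - β)) * X
  have hE : C α * (1 - B * W) = 0 := by
    have h : C (α - β) * (C α * (1 - B * W)) = 0 := by
      simp only [B, map_sub, map_mul, map_pow] at hy hker ⊢
      linear_combination (1 + (C α - C β) ^ 2 * X) * hker + (C α * W - (C α - C β)) * hy
    exact (mul_eq_zero.1 h).resolve_left ((map_ne_zero C).2 (sub_ne_zero.2 hαβ))
  have hsubst : subst s (C α * (c * (1 + C (α - β) * X - C α * X * c) - 1)) =
      C α * (W * (1 + C (α - β) * s - C α * s * W) - 1) := by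
    have hφC (r : K) : substAlgHom (HasSubst.of_constantCoeff_zero' hs0) (C r) = C r :=
      AlgHom.commutes _ r
    rw [← coe_substAlgHom (HasSubst.of_constantCoeff_zero' hs0)]
    simp only [map_mul, map_sub, map_add, map_one, substAlgHom_X, hφC, coe_substAlgHom, W]
  -- `W = 1 / B` up to the factor `α`, and `s (1 + (α - β)² X) = (α - β) X B`.
  have hT : (1 + C ((α - β) ^ 2) * X) * B ^ 2 *
      (C α * (W * (1 + C (α - β) * s - C α * s * W) - 1)) = 0 := by
    simp only [s, B, map_sub, map_mul, map_pow] at hy hE ⊢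
    linear_combination
      ((C α - C β) * X * (1 - C β * (C α - C β) * X) ^ 2 * W * C α
        - C α ^ 2 * X * (1 - C β * (C α - C β) * X) ^ 2 * W ^ 2) * hy
      + (-(1 + (C α - C β) ^ 2 * X) * (1 - C β * (C α - C β) * X)
        - (C α - C β) ^ 2 * X * (1 - C β * (C α - C β) * X) ^ 2
        + (C α - C β) * X * (1 - C β * (C α - C β) * X)
          * (2 * C α - C α * (1 - (1 - C β * (C α - C β) * X) * W))) * hE
  have hAB : (1 + C ((α - β) ^ 2) * X) * B ^ 2 ≠ 0 := fun h => by
    simpa [B] using congrArg constantCoeff h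
  apply subst_injective hs0 hs1
  rw [hsubst, (mul_eq_zero.1 hT).resolve_left hAB,
    ← coe_substAlgHom (HasSubst.of_constantCoeff_zero' hs0), map_zero]

theorem kernel_mul_series_eval (hg : SolvesRecurrence α β g) (x : K) :
    (C (x - α) + C (x * (α - β) ^ 2) * X) * mk (fun n => (α - β) ^ n * (g n).eval x) =
      C (x - α) + C (α * (α - β) * (x - β)) * X * rescale (x - β) (mk fun n => (g n).eval α) := by
  ext n
  rcases n with _ | n
  · simp [hg.1]
  · have h := congrArg (Polynomial.eval x) (hg.2 n)
    simp only [Polynomial.eval_mul, Polynomial.eval_sub, Polynomial.eval_pow, Polynomial.eval_X,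
      Polynomial.eval_C] at h
    simp only [add_mul, map_add, coeff_C_mul, mul_assoc, coeff_succ_X_mul, coeff_mk, coeff_C,
      coeff_rescale, Nat.succ_ne_zero, if_false]
    linear_combination (α - β) * h

theorem eq_of_sq_eq_radicand [CharZero K] (hg : SolvesRecurrence α β g) (hαβ : α ≠ β) (x : K)
    {S : K⟦X⟧} (hS0 : constantCoeff S = 1)
    (hS : S ^ 2 = 1 - C (2 * (x - β) * (α + β)) * X + C ((x - β) ^ 2 * (α - β) ^ 2) * X ^ 2) :
    S = 1 + C ((x - β) * (α - β)) * X -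
      C (2 * α * (x - β)) * X * rescale (x - β) (mk fun n => (g n).eval α) := by
  set Y := rescale (x - β) (mk fun n => (g n).eval α)
  have hY : C α * (Y * (1 + C ((α - β) * (x - β)) * X - C (α * (x - β)) * X * Y) - 1) = 0 := by
    have h := congrArg (rescale (x - β)) (hg.alpha_mul_quadratic_eq_zero hαβ)
    simp only [map_mul, map_sub, map_add, map_one, map_zero, rescale_X, rescale_C] at h ⊢
    linear_combination h
  refine eq_of_sq_eq_sq ?_ (by simp [hS0]) (by simp)
  rw [hS]
  simp only [map_mul, map_sub, map_add, map_pow, map_ofNat] at hY ⊢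
  linear_combination 4 * (C x - C β) * X * hY

end SolvesRecurrence

end

theorem stmt15 {K : Type*} [Field K] [CharZero K] (α β x : K) (hαβ : α ≠ β) (hxα : x ≠ α)
    (g : ℕ → Polynomial K) (hg0 : g 0 = 1)
    (hrec : ∀ n : ℕ, 1 ≤ n →
      (Polynomial.X - Polynomial.C α) * Polynomial.C ((α - β) ^ (n - 1)) * g n =
        Polynomial.C α * (Polynomial.X - Polynomial.C β) ^ n * Polynomial.C ((g (n - 1)).eval α) -
          Polynomial.X * Polynomial.C ((α - β) ^ n) * g (n - 1))
    (S : PowerSeries K) (hS0 : PowerSeries.coeff 0 S = 1)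
    (hS : S ^ 2 = 1 - PowerSeries.C (2 * (x - β) * (α + β)) * PowerSeries.X +
      PowerSeries.C ((x - β) ^ 2 * (α - β) ^ 2) * PowerSeries.X ^ 2) :
    PowerSeries.mk (fun n => (α - β) ^ ((n : ℤ) - 1) * (g n).eval x) =
      (1 + PowerSeries.C ((x - β) * (α - β)) * PowerSeries.X - S +
          PowerSeries.C (2 * (x - α) / (α - β))) *
        (PowerSeries.C (2 * (x - α)) +
          PowerSeries.C (2 * x * (α - β) ^ 2) * PowerSeries.X)⁻¹ := by
  have hg : SolvesRecurrence α β g := ⟨hg0, fun n => by simpa using hrec (n + 1) (by omega)⟩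
  have hd : α - β ≠ 0 := sub_ne_zero.2 hαβ
  have hgen := hg.kernel_mul_series_eval x
  have hSY := hg.eq_of_sq_eq_radicand hαβ x (by rw [← coeff_zero_eq_constantCoeff_apply, hS0]) hS
  have hG : mk (fun n => (α - β) ^ ((n : ℤ) - 1) * (g n).eval x) =
      C (α - β)⁻¹ * mk (fun n => (α - β) ^ n * (g n).eval x) := by
    ext n
    simp only [coeff_mk, coeff_C_mul, zpow_sub₀ hd, zpow_natCast, zpow_one]
    ring
  have hD : constantCoeff (C (2 * (x - α)) + C (2 * x * (α - β) ^ 2) * X) ≠ 0 := by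
    simpa using sub_ne_zero.2 hxα
  have hinv : C (α - β)⁻¹ * (C α - C β) = 1 := by
    rw [← map_sub, ← map_mul, inv_mul_cancel₀ hd, map_one]
  rw [eq_mul_inv_iff_mul_eq hD, hG, hSY]
  simp only [div_eq_mul_inv, map_mul, map_sub, map_pow, map_ofNat] at hgen ⊢
  linear_combination 2 * C (α - β)⁻¹ * hgen +
    2 * C α * (C x - C β) * X * rescale (x - β) (mk fun n => (g n).eval α) * hinv
end
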